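/- arXiv:2206.15308 — 2 statements merged into one kernel-verified Lean document; each statement's English description precedes it below -/
import Mathlib

section
/- Let V be a finite set and μ a probability distribution over assignments V → {F, T}. Suppose μ is ε-uniform for some ε ∈ (0,1). Then for every subset T ⊆ V and every assignment ω : T → {F, T}, the probability under μ that the sampled assignment agrees with ω on all of T is at most ((1/2)·e^ε)^{|T|}. -/
open scoped Classical

/-- If a distribution `μ` on assignments `V → Bool` is `ε`-uniform (all conditional
marginals, given a pinning of all other variables, are at most `e^ε / 2`), then for
every `T ⊆ V` and every `ω : T → Bool`, the probability that a sample agrees with `ω`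
on all of `T` is at most `(e^ε / 2)^|T|`. -/
theorem eps_uniform_agreement_bound {V : Type*} [Fintype V] [DecidableEq V]
    (μ : (V → Bool) → ℝ) (hμ0 : ∀ σ, 0 ≤ μ σ) (hμ1 : ∑ σ, μ σ = 1)
    (ε : ℝ) (hε0 : 0 < ε) (hε1 : ε < 1)
    (hunif : ∀ (v : V) (Λ : V → Bool) (b : Bool),
      0 < ∑ σ ∈ Finset.univ.filter (fun σ : V → Bool => ∀ w, w ≠ v → σ w = Λ w), μ σ →
      ∑ σ ∈ Finset.univ.filter (fun σ : V → Bool => (∀ w, w ≠ v → σ w = Λ w) ∧ σ v = b), μ σ ≤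
        (Real.exp ε / 2) *
          ∑ σ ∈ Finset.univ.filter (fun σ : V → Bool => ∀ w, w ≠ v → σ w = Λ w), μ σ) :
    ∀ (T : Finset V) (ω : V → Bool),
      ∑ σ ∈ Finset.univ.filter (fun σ : V → Bool => ∀ v ∈ T, σ v = ω v), μ σ ≤
        (Real.exp ε / 2) ^ T.card := by
  intro T
  induction T using Finset.induction_on with
  | empty =>
    intro ω
    simp [hμ1]
  | @insert v S hv ih =>
    intro ω
    set c : ℝ := Real.exp ε / 2 with hc
    have hc0 : 0 ≤ c := by positivity
    set C : Finset (V → Bool) :=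
      Finset.univ.filter (fun Λ : V → Bool => Λ v = false ∧ ∀ u ∈ S, Λ u = ω u) with hC
    have hdisj : ∀ Λ₁ ∈ C, ∀ Λ₂ ∈ C, Λ₁ ≠ Λ₂ →
        Disjoint (Finset.univ.filter (fun σ : V → Bool => ∀ w, w ≠ v → σ w = Λ₁ w))
          (Finset.univ.filter (fun σ : V → Bool => ∀ w, w ≠ v → σ w = Λ₂ w)) := by
      intro Λ₁ h1 Λ₂ h2 hne
      simp only [hC, Finset.mem_filter, Finset.mem_univ, true_and] at h1 h2
      rw [Finset.disjoint_left]
      intro σ hσ1 hσ2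
      simp only [Finset.mem_filter, Finset.mem_univ, true_and] at hσ1 hσ2
      apply hne
      funext w
      by_cases hw : w = v
      · subst hw; rw [h1.1, h2.1]
      · rw [← hσ1 w hw, hσ2 w hw]
    have key2 : Finset.univ.filter (fun σ : V → Bool => ∀ u ∈ S, σ u = ω u) =
        C.biUnion (fun Λ => Finset.univ.filter (fun σ : V → Bool => ∀ w, w ≠ v → σ w = Λ w)) := by
      ext σ
      simp only [Finset.mem_filter, Finset.mem_univ, true_and, Finset.mem_biUnion, hC]
      constructor
      · intro h
        refine ⟨Function.update σ v false, ⟨Function.update_self .., fun u hu => ?_⟩, fun w hw => ?_⟩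
        · rw [Function.update_of_ne (by rintro rfl; exact hv hu)]; exact h u hu
        · rw [Function.update_of_ne hw]
      · rintro ⟨Λ, ⟨_, hΛS⟩, hσΛ⟩ u hu
        rw [hσΛ u (by rintro rfl; exact hv hu)]; exact hΛS u hu
    have key1 : Finset.univ.filter (fun σ : V → Bool => ∀ u ∈ insert v S, σ u = ω u) =
        C.biUnion (fun Λ => Finset.univ.filter
          (fun σ : V → Bool => (∀ w, w ≠ v → σ w = Λ w) ∧ σ v = ω v)) := by
      ext σ
      simp only [Finset.mem_filter, Finset.mem_univ, true_and, Finset.mem_biUnion, hC,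
        Finset.mem_insert]
      constructor
      · intro h
        refine ⟨Function.update σ v false, ⟨Function.update_self .., fun u hu => ?_⟩,
          fun w hw => ?_, h v (Or.inl rfl)⟩
        · rw [Function.update_of_ne (by rintro rfl; exact hv hu)]
          exact h u (Or.inr hu)
        · rw [Function.update_of_ne hw]
      · rintro ⟨Λ, ⟨_, hΛS⟩, hσΛ, hσv⟩ u hu
        rcases hu with rfl | hu
        · exact hσv
        · rw [hσΛ u (by rintro rfl; exact hv hu)]; exact hΛS u hu
    have hdisj1 : ∀ Λ₁ ∈ C, ∀ Λ₂ ∈ C, Λ₁ ≠ Λ₂ →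
        Disjoint (Finset.univ.filter
            (fun σ : V → Bool => (∀ w, w ≠ v → σ w = Λ₁ w) ∧ σ v = ω v))
          (Finset.univ.filter
            (fun σ : V → Bool => (∀ w, w ≠ v → σ w = Λ₂ w) ∧ σ v = ω v)) := by
      intro Λ₁ h1 Λ₂ h2 hne
      refine Finset.disjoint_of_subset_left ?_ (Finset.disjoint_of_subset_right ?_
        (hdisj Λ₁ h1 Λ₂ h2 hne)) <;>
        · intro σ hσ
          simp only [Finset.mem_filter, Finset.mem_univ, true_and] at hσ ⊢
          exact hσ.1
    calc ∑ σ ∈ Finset.univ.filter (fun σ : V → Bool => ∀ u ∈ insert v S, σ u = ω u), μ σ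
        = ∑ Λ ∈ C, ∑ σ ∈ Finset.univ.filter
            (fun σ : V → Bool => (∀ w, w ≠ v → σ w = Λ w) ∧ σ v = ω v), μ σ := by
          rw [key1, Finset.sum_biUnion hdisj1]
      _ ≤ ∑ Λ ∈ C, c * ∑ σ ∈ Finset.univ.filter
            (fun σ : V → Bool => ∀ w, w ≠ v → σ w = Λ w), μ σ := by
          apply Finset.sum_le_sum
          intro Λ hΛ
          by_cases hpos : 0 < ∑ σ ∈ Finset.univ.filter
              (fun σ : V → Bool => ∀ w, w ≠ v → σ w = Λ w), μ σ
          · exact hunif v Λ (ω v) hpos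
          · have hle : ∑ σ ∈ Finset.univ.filter
                (fun σ : V → Bool => (∀ w, w ≠ v → σ w = Λ w) ∧ σ v = ω v), μ σ ≤
                ∑ σ ∈ Finset.univ.filter
                (fun σ : V → Bool => ∀ w, w ≠ v → σ w = Λ w), μ σ := by
              apply Finset.sum_le_sum_of_subset_of_nonneg
              · intro σ hσ
                simp only [Finset.mem_filter, Finset.mem_univ, true_and] at hσ ⊢
                exact hσ.1
              · intro σ _ _; exact hμ0 σ
            have hz : ∑ σ ∈ Finset.univ.filter
                (fun σ : V → Bool => ∀ w, w ≠ v → σ w = Λ w), μ σ = 0 := by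
              refine le_antisymm (not_lt.mp hpos) (Finset.sum_nonneg fun σ _ => hμ0 σ)
            rw [hz, mul_zero]
            exact hle.trans_eq hz
      _ = c * ∑ σ ∈ Finset.univ.filter (fun σ : V → Bool => ∀ u ∈ S, σ u = ω u), μ σ := by
          rw [key2, Finset.sum_biUnion hdisj, Finset.mul_sum]
      _ ≤ c * c ^ S.card := by
          exact mul_le_mul_of_nonneg_left (ih ω) hc0
      _ = c ^ (insert v S).card := by
          rw [Finset.card_insert_of_notMem hv, pow_succ, mul_comm]
end

section
/- Let G = (V, E) be a connected graph, let v ∈ V, and let ℓ be a positive integer. Let G^{≤3} denote the graph on V where u and w are adjacent iff there is a path in G from u to w of length at most 3. Let n_{G,ℓ}(v) denote the number of connected induced subgraphs of G of size ℓ containing v. Then for ℓ' = min{3ℓ, |V|}, we have n_{G^{≤3}, ℓ}(v) ≤ 2^{ℓ'} · n_{G, ℓ'}(v). -/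
open scoped Classical

/-- The graph `G^{≤3}`: vertices of `G`, with `u ∼ w` iff there is a path in `G` from `u`
to `w` of (positive) length at most `3`. -/
def distLE3 {V : Type*} (G : SimpleGraph V) : SimpleGraph V where
  Adj u w := u ≠ w ∧ G.Reachable u w ∧ G.dist u w ≤ 3
  symm := ⟨by
    rintro u w ⟨h1, h2, h3⟩
    exact ⟨h1.symm, h2.symm, by rwa [SimpleGraph.dist_comm]⟩⟩
  loopless := ⟨fun u h => h.1 rfl⟩

/-- `nConn G ℓ v` is the number of connected induced subgraphs of `G` of size `ℓ`
containing `v`. -/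
noncomputable def nConn {V : Type*} [Fintype V] (G : SimpleGraph V) (ℓ : ℕ) (v : V) : ℕ :=
  {T : Finset V | T.card = ℓ ∧ v ∈ T ∧ (G.induce (T : Set V)).Connected}.ncard

/-!
A set `T` connected in `G^{≤3}` can be grown from `v` one vertex at a time, each new vertex
joined to the current set by a `G`-path of length at most 3. The union of these paths is a
`G`-connected set of at most `3|T| - 2` vertices containing `T`, and inside the connected graph
`G` it extends to a `G`-connected set `H` of exactly `ℓ'` vertices. So every `T` lies in some `H`
counted by `n_{G,ℓ'}(v)`, and each such `H` has at most `2^{ℓ'}` subsets.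
-/

namespace SimpleGraph

variable {V : Type*} {G Γ : SimpleGraph V}

lemma Preconnected.exists_adj_of_mem_of_notMem (hG : G.Preconnected) {S : Set V} {x y : V}
    (hx : x ∈ S) (hy : y ∉ S) : ∃ a ∈ S, ∃ b ∉ S, G.Adj a b := by
  obtain ⟨p⟩ := hG x y
  obtain ⟨d, -, hd₁, hd₂⟩ := p.exists_boundary_dart S hx hy
  exact ⟨d.fst, hd₁, d.snd, hd₂, d.adj⟩

lemma exists_adj_of_connected_induce {U S : Set V} (hU : (G.induce U).Connected) {x y : V}
    (hx : x ∈ S) (hxU : x ∈ U) (hyU : y ∈ U) (hy : y ∉ S) :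
    ∃ a ∈ S, ∃ b ∈ U, b ∉ S ∧ G.Adj a b := by
  obtain ⟨⟨a, haU⟩, ha, ⟨b, hbU⟩, hb, hab⟩ :=
    hU.preconnected.exists_adj_of_mem_of_notMem (S := Subtype.val ⁻¹' S)
      (x := ⟨x, hxU⟩) (y := ⟨y, hyU⟩) hx hy
  exact ⟨a, ha, b, hbU, hb, hab⟩

theorem induce_connected_induction {T : Finset V} (hT : (Γ.induce (T : Set V)).Connected)
    {v : V} (hv : v ∈ T) {P : Finset V → Prop} (base : P {v})
    (step : ∀ S ⊆ T, ∀ a ∈ S, ∀ b ∈ T, b ∉ S → Γ.Adj a b → P S → P (insert b S)) : P T := by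
  suffices ∀ k, ∀ S ⊆ T, v ∈ S → (T \ S).card = k → P S → P T from
    this _ {v} (Finset.singleton_subset_iff.mpr hv) (Finset.mem_singleton_self v) rfl base
  intro k
  induction k with
  | zero =>
    intro S hST _ hk hS
    rw [Finset.card_eq_zero, Finset.sdiff_eq_empty_iff_subset] at hk
    rwa [← hST.antisymm hk]
  | succ k ih =>
    intro S hST hvS hk hS
    obtain ⟨y, hy⟩ := (Finset.card_pos (s := T \ S)).mp (by omega)
    rw [Finset.mem_sdiff] at hy
    obtain ⟨a, ha, b, hbT, hbS, hab⟩ :=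
      exists_adj_of_connected_induce hT (S := (S : Set V)) hvS (hST hvS) hy.1 hy.2
    refine ih (insert b S) (Finset.insert_subset hbT hST) (Finset.mem_insert_of_mem hvS) ?_
      (step S hST a ha b hbT hbS hab hS)
    rw [Finset.sdiff_insert, Finset.card_erase_of_mem (Finset.mem_sdiff.mpr ⟨hbT, hbS⟩), hk,
      Nat.add_sub_cancel]

lemma card_union_support_toFinset_le {H : Finset V} {a b : V} (p : G.Walk a b) (ha : a ∈ H) :
    (H ∪ p.support.toFinset).card ≤ H.card + p.length := by
  have hinter : 0 < (H ∩ p.support.toFinset).card :=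
    Finset.card_pos.mpr ⟨a, Finset.mem_inter.mpr ⟨ha, List.mem_toFinset.mpr p.start_mem_support⟩⟩
  have hsupp : p.support.toFinset.card ≤ p.length + 1 :=
    p.length_support ▸ p.support.toFinset_card_le
  have := Finset.card_union_add_card_inter H p.support.toFinset
  omega

theorem exists_connected_superset_card_le {k : ℕ}
    (hΓG : ∀ ⦃u w⦄, Γ.Adj u w → ∃ p : G.Walk u w, p.length ≤ k)
    {T : Finset V} (hT : (Γ.induce (T : Set V)).Connected) :
    ∃ H : Finset V, T ⊆ H ∧ (G.induce (H : Set V)).Connected ∧ H.card + k ≤ k * T.card + 1 := by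
  obtain ⟨⟨v, hv⟩⟩ := hT.nonempty
  refine induce_connected_induction hT hv
    (P := fun S => ∃ H : Finset V, S ⊆ H ∧ (G.induce (H : Set V)).Connected ∧
      H.card + k ≤ k * S.card + 1) ⟨{v}, subset_rfl, ?_, by simp [add_comm]⟩ ?_
  · rw [Finset.coe_singleton, induce_singleton_eq_top]
    exact connected_top
  rintro S - a ha b - hb hab ⟨H, hSH, hH, hcard⟩
  obtain ⟨p, hp⟩ := hΓG hab
  refine ⟨H ∪ p.support.toFinset, ?_, ?_, ?_⟩
  · exact Finset.insert_subset (Finset.mem_union_right _ (List.mem_toFinset.mpr p.end_mem_support))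
      (hSH.trans Finset.subset_union_left)
  · rw [Finset.coe_union, List.coe_toFinset]
    exact induce_union_connected hH.preconnected p.connected_induce_support.preconnected
      ⟨a, hSH ha, p.start_mem_support⟩
  · have := card_union_support_toFinset_le p (hSH ha)
    rw [Finset.card_insert_of_notMem hb, mul_add_one]
    omega

theorem Preconnected.exists_connected_superset_card_eq [Fintype V] (hG : G.Preconnected)
    {H : Finset V} (hH : (G.induce (H : Set V)).Connected) {n : ℕ} (hHn : H.card ≤ n)
    (hn : n ≤ Fintype.card V) :
    ∃ H' : Finset V, H ⊆ H' ∧ H'.card = n ∧ (G.induce (H' : Set V)).Connected := by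
  obtain ⟨k, rfl⟩ := Nat.exists_eq_add_of_le hHn
  induction k generalizing H with
  | zero => exact ⟨H, subset_rfl, rfl, hH⟩
  | succ k ih =>
    obtain ⟨⟨x, hx⟩⟩ := hH.nonempty
    obtain ⟨y, -, hy⟩ := Finset.exists_mem_notMem_of_card_lt_card
      (s := H) (t := Finset.univ) (by rw [Finset.card_univ]; omega)
    obtain ⟨a, ha, b, hb, hab⟩ := hG.exists_adj_of_mem_of_notMem (S := (H : Set V)) hx hy
    have hbH : (G.induce (insert b H : Finset V)).Connected := by
      rw [Finset.coe_insert, ← Set.union_singleton]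
      exact connected_induce_union hH.preconnected
        (by rw [induce_singleton_eq_top]; exact preconnected_top) ha rfl hab
    have hcard : (insert b H).card = H.card + 1 := Finset.card_insert_of_notMem hb
    obtain ⟨H', hsub, hH'card, hH'⟩ := ih hbH (by omega) (by omega)
    exact ⟨H', (Finset.subset_insert b H).trans hsub, by omega, hH'⟩

end SimpleGraph

lemma distLE3_adj_exists_walk {V : Type*} {G : SimpleGraph V} {u w : V}
    (h : (distLE3 G).Adj u w) : ∃ p : G.Walk u w, p.length ≤ 3 := by
  obtain ⟨p, hp⟩ := h.2.1.exists_walk_length_eq_dist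
  exact ⟨p, hp ▸ h.2.2⟩

lemma Set.ncard_le_two_pow_mul_ncard_of_forall_subset {α : Type*} {A B : Set (Finset α)}
    (hBfin : B.Finite) {n : ℕ} (hB : ∀ H ∈ B, H.card = n) (hAB : ∀ T ∈ A, ∃ H ∈ B, T ⊆ H) :
    A.ncard ≤ 2 ^ n * B.ncard := by
  calc A.ncard ≤ ((hBfin.toFinset.biUnion Finset.powerset : Finset (Finset α)) : Set _).ncard :=
        Set.ncard_le_ncard fun T hT => by simpa using hAB T hT
    _ ≤ hBfin.toFinset.card * 2 ^ n := by
        rw [Set.ncard_coe_finset]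
        exact Finset.card_biUnion_le_card_mul _ _ _ fun H hH => by
          rw [Finset.card_powerset, hB H (by simpa using hH)]
    _ = 2 ^ n * B.ncard := by rw [mul_comm, Set.ncard_eq_toFinset_card B hBfin]

theorem nConn_distLE3_le_general {V : Type*} [Fintype V]
    (G : SimpleGraph V) (hG : G.Connected) (v : V) (ℓ : ℕ) :
    nConn (distLE3 G) ℓ v ≤
      2 ^ (min (3 * ℓ) (Fintype.card V)) * nConn G (min (3 * ℓ) (Fintype.card V)) v := by
  unfold nConn
  refine Set.ncard_le_two_pow_mul_ncard_of_forall_subset (Set.toFinite _) (fun H hH => hH.1) ?_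
  rintro T ⟨rfl, hvT, hT⟩
  obtain ⟨H₀, hTH₀, hH₀, hH₀card⟩ :=
    G.exists_connected_superset_card_le (fun _ _ => distLE3_adj_exists_walk) hT
  obtain ⟨H, hH₀H, hHcard, hH⟩ := hG.preconnected.exists_connected_superset_card_eq hH₀
    (n := min (3 * T.card) (Fintype.card V))
    (le_min (by omega) (Finset.card_le_univ H₀)) (min_le_right _ _)
  exact ⟨H, ⟨hHcard, hH₀H (hTH₀ hvT), hH⟩, hTH₀.trans hH₀H⟩

/-- For a connected graph `G`, a vertex `v` and `ℓ ≥ 1`, with `ℓ' = min(3ℓ, |V|)`, the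
number of connected induced subgraphs of `G^{≤3}` of size `ℓ` containing `v` is at most
`2^{ℓ'}` times the number of connected induced subgraphs of `G` of size `ℓ'` containing
`v`. -/
theorem nConn_distLE3_le {V : Type*} [Fintype V] [DecidableEq V]
    (G : SimpleGraph V) (hG : G.Connected) (v : V) (ℓ : ℕ) (hℓ : 1 ≤ ℓ) :
    nConn (distLE3 G) ℓ v ≤
      2 ^ (min (3 * ℓ) (Fintype.card V)) * nConn G (min (3 * ℓ) (Fintype.card V)) v :=
  nConn_distLE3_le_general G hG v ℓ
end
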